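/- arXiv:math/0509650 — 6 statements merged into one kernel-verified Lean document; each statement's English description precedes it below -/
import Mathlib

section
/- (Swapping/equivalent-model lemma for the augmented error.) Let F ∈ ℝ^{n×n}, b, c ∈ ℝⁿ, θ ∈ ℝᵐ constant, φ : [0,∞) → ℝᵐ continuous, and θ̂ : [0,∞) → ℝᵐ differentiable. Suppose ε : [0,∞) → ℝⁿ satisfies ε' = F ε + b φ(t)ᵀ (θ − θ̂(t)), Ω : [0,∞) → ℝ^{n×m} satisfies Ω' = F Ω + b φ(t)ᵀ, and Ξ : [0,∞) → ℝⁿ satisfies Ξ' = F Ξ + b φ(t)ᵀ θ̂(t). Define ω := Ωᵀ c and the augmented error ê := cᵀ ε + cᵀ Ξ − ωᵀ θ̂. Then δ := ε + Ξ − Ω θ satisfies δ' = F δ, and consequently ê(t) = ω(t)ᵀ (θ − θ̂(t)) + cᵀ δ(t) for all t ≥ 0. -/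
open Matrix Filter
open scoped RealInnerProductSpace

attribute [local instance] Matrix.normedAddCommGroup Matrix.normedSpace

noncomputable section

/-- View a plain vector `Fin n → ℝ` as an element of Euclidean space. -/
def toE {n : ℕ} (v : Fin n → ℝ) : EuclideanSpace ℝ (Fin n) := WithLp.toLp 2 v

/-- A real square matrix is Hurwitz if every eigenvalue (over `ℂ`) has negative real part. -/
def IsHurwitz {n : ℕ} (F : Matrix (Fin n) (Fin n) ℝ) : Prop :=
  ∀ μ ∈ spectrum ℂ (F.map Complex.ofReal), μ.re < 0

/-- Persistent excitation of a vector-valued signal on `[0,∞)`. -/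
def IsPE {m : ℕ} (f : ℝ → EuclideanSpace ℝ (Fin m)) : Prop :=
  Measurable f ∧ (∃ C, ∀ t ≥ (0:ℝ), ‖f t‖ ≤ C) ∧
  ∃ α > (0:ℝ), ∃ T > (0:ℝ), ∀ t ≥ (0:ℝ), ∀ v : EuclideanSpace ℝ (Fin m),
    α * ‖v‖ ^ 2 ≤ ∫ s in t..t + T, (⟪f s, v⟫ : ℝ) ^ 2

/-- The numerator polynomial `cᵀ ⬝ adjugate (s I - F) ⬝ b` of the transfer function
`H(s) = cᵀ (s I - F)⁻¹ b`, viewed as a polynomial over `ℂ`. -/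
def numeratorPoly {n : ℕ} (F : Matrix (Fin n) (Fin n) ℝ) (b c : EuclideanSpace ℝ (Fin n)) :
    Polynomial ℂ :=
  (fun i => Polynomial.C ((c i : ℂ))) ⬝ᵥ
    (Matrix.adjugate ((Matrix.scalar (Fin n)) Polynomial.X -
      F.map (fun a => Polynomial.C ((a : ℂ))))).mulVec (fun j => Polynomial.C ((b j : ℂ)))

/-- The transfer function `H(s) = cᵀ (s I - F)⁻¹ b` is minimum phase: every root of its
numerator polynomial has negative real part. -/
def IsMinimumPhase {n : ℕ} (F : Matrix (Fin n) (Fin n) ℝ) (b c : EuclideanSpace ℝ (Fin n)) :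
    Prop :=
  ∀ z : ℂ, (numeratorPoly F b c).IsRoot z → z.re < 0

/-- The dead-zone function with threshold `θs > 0`. -/
def deadZone {m : ℕ} (θs : ℝ) (v : EuclideanSpace ℝ (Fin m)) : ℝ :=
  if ‖v‖ < θs then 0 else if ‖v‖ ≤ 2 * θs then ‖v‖ / θs - 1 else 1

/-- **Swapping / equivalent-model lemma** for the augmented error (key step of Theorem 1):
`δ := ε + Ξ - Ω θ` satisfies `δ' = F δ`, hence `ê = ωᵀ(θ - θ̂) + cᵀδ`. -/
theorem swapping_lemma
    {n m : ℕ}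
    (F : Matrix (Fin n) (Fin n) ℝ) (b c : EuclideanSpace ℝ (Fin n))
    (θ : EuclideanSpace ℝ (Fin m))
    (φ : ℝ → EuclideanSpace ℝ (Fin m)) (hφ : Continuous φ)
    (θh : ℝ → EuclideanSpace ℝ (Fin m)) (hθh : Differentiable ℝ θh)
    (ε Ξ : ℝ → EuclideanSpace ℝ (Fin n)) (Ω : ℝ → Matrix (Fin n) (Fin m) ℝ)
    -- error model:  ε' = F ε + b φ(t)ᵀ (θ - θ̂)
    (hε : ∀ t ≥ (0:ℝ),
      HasDerivAt ε (toE (F.mulVec (ε t)) + (⟪φ t, θ - θh t⟫ : ℝ) • b) t)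
    -- filter:  Ω' = F Ω + b φ(t)ᵀ
    (hΩ : ∀ t ≥ (0:ℝ), HasDerivAt Ω (F * Ω t + Matrix.vecMulVec b (φ t)) t)
    -- filter:  Ξ' = F Ξ + b φ(t)ᵀ θ̂
    (hΞ : ∀ t ≥ (0:ℝ),
      HasDerivAt Ξ (toE (F.mulVec (Ξ t)) + (⟪φ t, θh t⟫ : ℝ) • b) t)
    (ω : ℝ → EuclideanSpace ℝ (Fin m)) (hω : ∀ t, ω t = toE ((Ω t)ᵀ.mulVec c))
    (ea : ℝ → ℝ)
    (hea : ∀ t, ea t = ⟪c, ε t⟫ + ⟪c, Ξ t⟫ - ⟪ω t, θh t⟫)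
    (δ : ℝ → EuclideanSpace ℝ (Fin n))
    (hδ : ∀ t, δ t = ε t + Ξ t - toE ((Ω t).mulVec θ)) :
    (∀ t ≥ (0:ℝ), HasDerivAt δ (toE (F.mulVec (δ t))) t) ∧
    ∀ t ≥ (0:ℝ), ea t = ⟪ω t, θ - θh t⟫ + ⟪c, δ t⟫ := by
  have inner_dot : ∀ (k : ℕ) (x y : EuclideanSpace ℝ (Fin k)),
      (⟪x, y⟫ : ℝ) = ∑ i, x i * y i := by
    intro k x y
    simp [PiLp.inner_apply, RCLike.inner_apply, conj_trivial]
    exact Finset.sum_congr rfl fun _ _ => mul_comm _ _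
  constructor
  · intro t ht
    -- derivative of t ↦ Ω t ⬝ θ
    have hL : HasDerivAt (fun s => toE ((Ω s).mulVec θ))
        (toE ((F * Ω t + Matrix.vecMulVec b (φ t)).mulVec θ)) t := by
      let L : Matrix (Fin n) (Fin m) ℝ →ₗ[ℝ] EuclideanSpace ℝ (Fin n) :=
        { toFun := fun A => toE (A.mulVec θ)
          map_add' := by
            intro A B; ext i
            simp [toE, Matrix.add_mulVec]
          map_smul' := by
            intro r A; ext i
            simp [toE, Matrix.smul_mulVec] }
      exact L.toContinuousLinearMap.hasFDerivAt.comp_hasDerivAt t (hΩ t ht)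
    have hfun : δ = fun s => ε s + Ξ s - toE ((Ω s).mulVec θ) := funext hδ
    have h := ((hε t ht).add (hΞ t ht)).sub hL
    rw [hfun]
    refine h.congr_deriv (Eq.symm ?_)
    ext i
    simp only [toE, hδ, PiLp.add_apply, PiLp.sub_apply, PiLp.smul_apply, smul_eq_mul,
      inner_dot, Matrix.mulVec, dotProduct, Matrix.add_apply, Matrix.mul_apply,
      Matrix.vecMulVec_apply, PiLp.sub_apply, PiLp.add_apply]
    simp only [mul_sub, mul_add, sub_mul, add_mul, Finset.sum_sub_distrib,
      Finset.sum_add_distrib, Finset.mul_sum, Finset.sum_mul]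
    rw [Finset.sum_comm (s := Finset.univ) (t := Finset.univ)
      (f := fun (x : Fin n) (x_1 : Fin m) => F i x * (Ω t x x_1 * θ x_1))]
    ring_nf
    have hbφθ : (∑ x : Fin m, φ t x * θ x * b i) = ∑ x : Fin m, b i * φ t x * θ x :=
      Finset.sum_congr rfl fun x _ => by ring
    rw [hbφθ]
    ring
  · intro t ht
    rw [hea, hδ, hω]
    rw [inner_sub_right, inner_sub_right, inner_add_right]
    have key : (⟪toE ((Ω t)ᵀ.mulVec c), θ⟫ : ℝ) = ⟪c, toE ((Ω t).mulVec θ)⟫ := by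
      simp only [inner_dot, toE, Matrix.mulVec, dotProduct, Matrix.transpose_apply,
        Finset.sum_mul, Finset.mul_sum]
      rw [Finset.sum_comm]
      exact Finset.sum_congr rfl fun x _ => Finset.sum_congr rfl fun y _ => by ring
    rw [key]
    ring
end
end

section
/- Let ω : [0,∞) → ℝᵐ be continuous, γ > 0, and let θ̃ : [0,∞) → ℝᵐ be a differentiable solution of θ̃' = −γ ω(t) (ω(t)ᵀ θ̃(t)). Then the function t ↦ |θ̃(t)| is nonincreasing, and for every T > 0, ∫₀^T (ω(t)ᵀ θ̃(t))² dt ≤ |θ̃(0)|² / (2γ); in particular ∫₀^∞ (ω(t)ᵀ θ̃(t))² dt ≤ |θ̃(0)|² / (2γ). -/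
open Matrix Filter
open scoped RealInnerProductSpace

attribute [local instance] Matrix.normedAddCommGroup Matrix.normedSpace

noncomputable section

open MeasureTheory in
/-- **Lyapunov decrease for the gradient adaptation law**: along `θ̃' = -γ ω (ωᵀ θ̃)`,
the norm `|θ̃|` is nonincreasing and `∫ (ωᵀθ̃)² ≤ |θ̃(0)|²/(2γ)`. -/
theorem gradient_law_lyapunov
    {m : ℕ}
    (ω : ℝ → EuclideanSpace ℝ (Fin m)) (hω : Continuous ω)
    (γ : ℝ) (hγ : 0 < γ)
    (θt : ℝ → EuclideanSpace ℝ (Fin m))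
    -- parameter error dynamics:  θ̃' = -γ ω (ωᵀ θ̃)
    (hode : ∀ t ≥ (0:ℝ), HasDerivAt θt (-((γ * (⟪ω t, θt t⟫ : ℝ)) • ω t)) t) :
    AntitoneOn (fun t => ‖θt t‖) (Set.Ici 0) ∧
    (∀ T > (0:ℝ), (∫ t in (0:ℝ)..T, (⟪ω t, θt t⟫ : ℝ) ^ 2) ≤ ‖θt 0‖ ^ 2 / (2 * γ)) ∧
    (∫ t in Set.Ioi (0:ℝ), (⟪ω t, θt t⟫ : ℝ) ^ 2) ≤ ‖θt 0‖ ^ 2 / (2 * γ) := by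
  set e : ℝ → ℝ := fun t => (⟪ω t, θt t⟫ : ℝ) with he
  set g : ℝ → ℝ := fun t => ‖θt t‖ ^ 2 with hgdef
  have hθcont : ∀ t ≥ (0:ℝ), ContinuousAt θt t := fun t ht => (hode t ht).continuousAt
  have hecont : ∀ t ≥ (0:ℝ), ContinuousAt e t := fun t ht =>
    (hω.continuousAt).inner (hθcont t ht)
  have hg : ∀ t ≥ (0:ℝ), HasDerivAt g (-(2 * γ) * e t ^ 2) t := by
    intro t ht
    have h1 : HasDerivAt (fun s => (⟪θt s, θt s⟫ : ℝ))
        ((⟪θt t, -((γ * e t) • ω t)⟫ : ℝ) + (⟪-((γ * e t) • ω t), θt t⟫ : ℝ)) t :=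
      HasDerivAt.inner ℝ (hode t ht) (hode t ht)
    have heq : ((⟪θt t, -((γ * e t) • ω t)⟫ : ℝ) + (⟪-((γ * e t) • ω t), θt t⟫ : ℝ))
        = -(2 * γ) * e t ^ 2 := by
      rw [inner_neg_right, inner_neg_left, real_inner_smul_right, real_inner_smul_left,
        real_inner_comm (ω t) (θt t)]
      simp only [he]
      ring
    have hfun : g = fun s => (⟪θt s, θt s⟫ : ℝ) :=
      funext fun s => (real_inner_self_eq_norm_sq _).symm
    rw [hfun]
    exact heq ▸ h1
  have hganti : AntitoneOn g (Set.Ici 0) := by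
    apply antitoneOn_of_deriv_nonpos (convex_Ici 0)
    · exact fun t ht => (hg t ht).continuousAt.continuousWithinAt
    · intro t ht
      rw [interior_Ici] at ht
      exact (hg t ht.le).differentiableAt.differentiableWithinAt
    · intro t ht
      rw [interior_Ici] at ht
      rw [(hg t ht.le).deriv]
      nlinarith [sq_nonneg (e t)]
  have hnormanti : AntitoneOn (fun t => ‖θt t‖) (Set.Ici 0) := by
    intro s hs t ht hst
    have h := hganti hs ht hst
    simp only [hgdef] at h
    nlinarith [norm_nonneg (θt s), norm_nonneg (θt t)]
  have hTbound : ∀ T > (0:ℝ), (∫ t in (0:ℝ)..T, e t ^ 2) ≤ ‖θt 0‖ ^ 2 / (2 * γ) := by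
    intro T hT
    have h1 : (∫ t in (0:ℝ)..T, -(2 * γ) * e t ^ 2) = g T - g 0 := by
      apply intervalIntegral.integral_eq_sub_of_hasDerivAt
      · intro t ht
        rw [Set.uIcc_of_le hT.le] at ht
        exact hg t ht.1
      · apply ContinuousOn.intervalIntegrable
        intro t ht
        rw [Set.uIcc_of_le hT.le] at ht
        exact (ContinuousAt.const_smul ((hecont t ht.1).pow 2) (-(2*γ))).continuousWithinAt
    rw [intervalIntegral.integral_const_mul] at h1
    have hgT : (0:ℝ) ≤ g T := sq_nonneg _
    have hg0 : g 0 = ‖θt 0‖ ^ 2 := rfl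
    have h2γ : (0:ℝ) < 2 * γ := by linarith
    rw [le_div_iff₀ h2γ]
    nlinarith [h1]
  refine ⟨hnormanti, hTbound, ?_⟩
  have hintgr : IntegrableOn (fun t => e t ^ 2) (Set.Ioi 0) := by
    apply integrableOn_Ioi_of_intervalIntegral_norm_bounded (‖θt 0‖ ^ 2 / (2 * γ)) 0
      (b := fun i : ℝ => i) (l := atTop) ?_ tendsto_id ?_
    · intro i
      rcases le_or_gt i 0 with h | h
      · rw [Set.Ioc_eq_empty (by simpa using h)]
        simp
      · refine (ContinuousOn.integrableOn_Icc ?_).mono_set Set.Ioc_subset_Icc_self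
        intro t ht
        exact ((hecont t ht.1).pow 2).continuousWithinAt
    · filter_upwards [eventually_gt_atTop (0:ℝ)] with i hi
      have heqn : (∫ t in (0:ℝ)..i, ‖e t ^ 2‖) = ∫ t in (0:ℝ)..i, e t ^ 2 := by
        apply intervalIntegral.integral_congr
        intro t _
        exact abs_of_nonneg (sq_nonneg _)
      rw [heqn]
      exact hTbound i hi
  have htend := intervalIntegral_tendsto_integral_Ioi 0 hintgr (tendsto_id (α := ℝ))
  exact le_of_tendsto htend
    (by filter_upwards [eventually_gt_atTop (0:ℝ)] with i hi using hTbound i hi)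
end
end

section
/- Let ω : [0,∞) → ℝᵐ be continuous, bounded, and persistently exciting, and let γ > 0. Then every differentiable solution θ̃ : [0,∞) → ℝᵐ of θ̃' = −γ ω(t) (ω(t)ᵀ θ̃(t)) converges to zero: θ̃(t) → 0 as t → ∞. -/
open Matrix Filter
open scoped RealInnerProductSpace

attribute [local instance] Matrix.normedAddCommGroup Matrix.normedSpace

noncomputable section

/-- **Parameter convergence under persistent excitation**: every solution of the gradient
adaptation error equation `θ̃' = -γ ω (ωᵀ θ̃)` with continuous, bounded, persistently
exciting regressor `ω` converges to zero. -/
theorem gradient_law_PE_convergence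
    {m : ℕ}
    (ω : ℝ → EuclideanSpace ℝ (Fin m)) (hω : Continuous ω)
    (hbdd : ∃ C, ∀ t ≥ (0:ℝ), ‖ω t‖ ≤ C)
    (hPE : IsPE ω)
    (γ : ℝ) (hγ : 0 < γ)
    (θt : ℝ → EuclideanSpace ℝ (Fin m))
    (hode : ∀ t ≥ (0:ℝ), HasDerivAt θt (-((γ * (⟪ω t, θt t⟫ : ℝ)) • ω t)) t) :
    Tendsto θt atTop (nhds 0) := by
  
  classical
  obtain ⟨-, -, α, hα, T, hT, hPEi⟩ := hPE
  obtain ⟨C0, hC0⟩ := hbdd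
  set C : ℝ := C0 + 1 with hCdef
  have hC : ∀ t ≥ (0:ℝ), ‖ω t‖ ≤ C := fun t ht => (hC0 t ht).trans (by simp [hCdef])
  have hCpos : 0 < C := by
    have h0 := (norm_nonneg (ω 0)).trans (hC0 0 le_rfl)
    simp only [hCdef]; linarith
  set g : ℝ → ℝ := fun s => ⟪ω s, θt s⟫ with hgdef
  have hθc : ContinuousOn θt (Set.Ici 0) :=
    fun x hx => (hode x hx).continuousAt.continuousWithinAt
  have hgc : ContinuousOn g (Set.Ici 0) := hω.continuousOn.inner hθc
  -- FTC for the Lyapunov function V t = ‖θt t‖²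
  have key1 : ∀ a b : ℝ, 0 ≤ a → a ≤ b →
      ‖θt b‖ ^ 2 - ‖θt a‖ ^ 2 = ∫ s in a..b, -(2 * γ * g s ^ 2) := by
    intro a b ha hab
    have hsub : Set.uIcc a b ⊆ Set.Ici 0 := by
      rw [Set.uIcc_of_le hab]; exact fun x hx => ha.trans hx.1
    have hderiv : ∀ s ∈ Set.uIcc a b,
        HasDerivAt (fun u => ‖θt u‖ ^ 2) (-(2 * γ * g s ^ 2)) s := by
      intro s hs
      have hθ := hode s (hsub hs)
      have h1 := hθ.inner ℝ hθ
      have heq : (fun u => (⟪θt u, θt u⟫ : ℝ)) = fun u => ‖θt u‖ ^ 2 := by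
        funext u; rw [real_inner_self_eq_norm_sq]
      rw [heq] at h1
      refine HasDerivAt.congr_deriv h1 ?_
      simp only [inner_neg_left, inner_neg_right, real_inner_smul_left, real_inner_smul_right,
        hgdef]
      rw [real_inner_comm (ω s) (θt s)]
      ring
    have hint : IntervalIntegrable (fun s => -(2 * γ * g s ^ 2)) MeasureTheory.volume a b := by
      apply ContinuousOn.intervalIntegrable
      exact (continuousOn_const.mul ((hgc.mono hsub).pow 2)).neg
    exact (intervalIntegral.integral_eq_sub_of_hasDerivAt hderiv hint).symm
  have key2 : ∀ a b : ℝ, 0 ≤ a → a ≤ b →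
      2 * γ * ∫ s in a..b, g s ^ 2 = ‖θt a‖ ^ 2 - ‖θt b‖ ^ 2 := by
    intro a b ha hab
    have h := key1 a b ha hab
    rw [intervalIntegral.integral_neg] at h
    rw [← intervalIntegral.integral_const_mul]
    linarith
  have hInn : ∀ a b : ℝ, a ≤ b → (0:ℝ) ≤ ∫ s in a..b, g s ^ 2 :=
    fun a b hab => intervalIntegral.integral_nonneg hab (fun u _ => sq_nonneg _)
  have hVmono : ∀ a b : ℝ, 0 ≤ a → a ≤ b → ‖θt b‖ ^ 2 ≤ ‖θt a‖ ^ 2 := by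
    intro a b ha hab
    have h := key2 a b ha hab
    nlinarith [hInn a b hab]
  -- V converges, hence the tail integrals of g² tend to 0
  set W : ℝ → ℝ := fun t => ‖θt (max t 0)‖ ^ 2 with hWdef
  have hWanti : Antitone W := fun a b hab =>
    hVmono _ _ (le_max_right a 0) (max_le_max hab le_rfl)
  have hWbdd : BddBelow (Set.range W) := by
    refine ⟨0, ?_⟩
    rintro x ⟨t, rfl⟩
    positivity
  have hWt := tendsto_atTop_ciInf hWanti hWbdd
  set L : ℝ := ⨅ t, W t with hLdef
  have hVt : Tendsto (fun t => ‖θt t‖ ^ 2) atTop (nhds L) := by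
    refine hWt.congr' ?_
    filter_upwards [Ici_mem_atTop (0:ℝ)] with t ht
    simp [hWdef, max_eq_left (show (0:ℝ) ≤ t from ht)]
  have hV2 : Tendsto (fun t => ‖θt (t + T)‖ ^ 2) atTop (nhds L) :=
    hVt.comp (tendsto_atTop_add_const_right _ T tendsto_id)
  have hI0 : Tendsto (fun t => ∫ s in t..t + T, g s ^ 2) atTop (nhds 0) := by
    have h1 : Tendsto (fun t => (‖θt t‖ ^ 2 - ‖θt (t + T)‖ ^ 2) / (2 * γ)) atTop
        (nhds ((L - L) / (2 * γ))) := (hVt.sub hV2).div_const _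
    rw [sub_self, zero_div] at h1
    refine h1.congr' ?_
    filter_upwards [Ici_mem_atTop (0:ℝ)] with t ht
    have h := key2 t (t + T) ht (by linarith)
    field_simp
    linarith
  -- drift bound
  have key4 : ∀ t ≥ (0:ℝ), ∀ s ∈ Set.Icc t (t + T),
      ‖θt s - θt t‖ ≤ γ * C * ∫ r in t..t + T, |g r| := by
    intro t ht s hs
    have hts : t ≤ s := hs.1
    have hsub : Set.uIcc t s ⊆ Set.Ici 0 := by
      rw [Set.uIcc_of_le hts]; exact fun x hx => ht.trans hx.1
    have hsub' : Set.uIcc t (t + T) ⊆ Set.Ici 0 := by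
      rw [Set.uIcc_of_le (by linarith : t ≤ t + T)]
      exact fun x hx => ht.trans hx.1
    have hcont1 : ContinuousOn (fun r => -((γ * g r) • ω r)) (Set.uIcc t s) :=
      ((continuousOn_const.mul (hgc.mono hsub)).smul (hω.continuousOn)).neg
    have hFTC := intervalIntegral.integral_eq_sub_of_hasDerivAt
      (fun r hr => hode r (hsub hr)) hcont1.intervalIntegrable
    rw [← hFTC]
    have habs : ContinuousOn (fun r => |g r|) (Set.uIcc t (t + T)) := (hgc.mono hsub').abs
    have habs' : ContinuousOn (fun r => |g r|) (Set.uIcc t s) := by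
      apply habs.mono
      rw [Set.uIcc_of_le hts, Set.uIcc_of_le (by linarith : t ≤ t + T)]
      exact Set.Icc_subset_Icc le_rfl hs.2
    calc ‖∫ r in t..s, -((γ * g r) • ω r)‖
        ≤ ∫ r in t..s, ‖-((γ * g r) • ω r)‖ :=
          intervalIntegral.norm_integral_le_integral_norm hts
      _ ≤ ∫ r in t..s, γ * C * |g r| := by
          apply intervalIntegral.integral_mono_on hts
          · exact (hcont1.norm).intervalIntegrable
          · exact (continuousOn_const.mul habs').intervalIntegrable
          · intro r hr
            have hr0 : (0:ℝ) ≤ r := ht.trans hr.1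
            have hωr := hC r hr0
            rw [norm_neg, norm_smul, Real.norm_eq_abs, abs_mul, abs_of_pos hγ]
            have h1 : γ * |g r| * ‖ω r‖ ≤ γ * |g r| * C :=
              mul_le_mul_of_nonneg_left hωr (by positivity)
            calc γ * |g r| * ‖ω r‖ ≤ γ * |g r| * C := h1
              _ = γ * C * |g r| := by ring
      _ = γ * C * ∫ r in t..s, |g r| := intervalIntegral.integral_const_mul _ _
      _ ≤ γ * C * ∫ r in t..t + T, |g r| := by
          apply mul_le_mul_of_nonneg_left _ (by positivity)
          apply intervalIntegral.integral_mono_interval le_rfl hts hs.2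
          · exact MeasureTheory.ae_of_all _ (fun r => abs_nonneg _)
          · exact habs.intervalIntegrable
  -- PE estimate
  have key5 : ∀ t ≥ (0:ℝ),
      α * ‖θt t‖ ^ 2 ≤ 2 * (∫ s in t..t + T, g s ^ 2)
        + 2 * (C * (γ * C * ∫ r in t..t + T, |g r|)) ^ 2 * T := by
    intro t ht
    set D : ℝ := γ * C * ∫ r in t..t + T, |g r| with hDdef
    have hAnn : (0:ℝ) ≤ ∫ r in t..t + T, |g r| :=
      intervalIntegral.integral_nonneg (by linarith : t ≤ t + T) (fun u _ => abs_nonneg (g u))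
    have hDnn : 0 ≤ D := by
      rw [hDdef]; exact mul_nonneg (by positivity) hAnn
    have hsub' : Set.uIcc t (t + T) ⊆ Set.Ici 0 := by
      rw [Set.uIcc_of_le (by linarith : t ≤ t + T)]
      exact fun x hx => ht.trans hx.1
    have hPt := hPEi t ht (θt t)
    have hpoint : ∀ s ∈ Set.Icc t (t + T),
        (⟪ω s, θt t⟫ : ℝ) ^ 2 ≤ 2 * g s ^ 2 + 2 * (C * D) ^ 2 := by
      intro s hs
      have hs0 : (0:ℝ) ≤ s := ht.trans hs.1
      have hdrift : ‖θt s - θt t‖ ≤ D := key4 t ht s hs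
      have hsplit : (⟪ω s, θt t⟫ : ℝ) = g s - ⟪ω s, θt s - θt t⟫ := by
        rw [inner_sub_right]; simp [hgdef]
      have hCS : |(⟪ω s, θt s - θt t⟫ : ℝ)| ≤ C * D := by
        calc |(⟪ω s, θt s - θt t⟫ : ℝ)| ≤ ‖ω s‖ * ‖θt s - θt t‖ := abs_real_inner_le_norm _ _
          _ ≤ C * D := mul_le_mul (hC s hs0) hdrift (norm_nonneg _) (le_of_lt hCpos)
      rw [hsplit]
      have h2 := abs_le.mp hCS
      nlinarith [sq_nonneg (g s + ⟪ω s, θt s - θt t⟫), sq_nonneg (g s - ⟪ω s, θt s - θt t⟫)]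
    have hcLHS : ContinuousOn (fun s => (⟪ω s, θt t⟫ : ℝ) ^ 2) (Set.uIcc t (t + T)) :=
      ((hω.continuousOn.inner continuousOn_const).pow 2)
    have hcRHS : ContinuousOn (fun s => 2 * g s ^ 2 + 2 * (C * D) ^ 2) (Set.uIcc t (t + T)) :=
      (continuousOn_const.mul ((hgc.mono hsub').pow 2)).add continuousOn_const
    have hmono : (∫ s in t..t + T, (⟪ω s, θt t⟫ : ℝ) ^ 2)
        ≤ ∫ s in t..t + T, (2 * g s ^ 2 + 2 * (C * D) ^ 2) :=
      intervalIntegral.integral_mono_on (by linarith) hcLHS.intervalIntegrable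
        hcRHS.intervalIntegrable hpoint
    have hsplitInt : (∫ s in t..t + T, (2 * g s ^ 2 + 2 * (C * D) ^ 2))
        = 2 * (∫ s in t..t + T, g s ^ 2) + 2 * (C * D) ^ 2 * T := by
      rw [intervalIntegral.integral_add (f := fun s => 2 * g s ^ 2)
        ((continuousOn_const.mul ((hgc.mono hsub').pow 2)).intervalIntegrable)
        (intervalIntegrable_const), intervalIntegral.integral_const_mul,
        intervalIntegral.integral_const]
      simp [smul_eq_mul]
      ring
    calc α * ‖θt t‖ ^ 2 ≤ ∫ s in t..t + T, (⟪ω s, θt t⟫ : ℝ) ^ 2 := hPt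
      _ ≤ ∫ s in t..t + T, (2 * g s ^ 2 + 2 * (C * D) ^ 2) := hmono
      _ = 2 * (∫ s in t..t + T, g s ^ 2) + 2 * (C * D) ^ 2 * T := hsplitInt
  -- the tail integral of |g| tends to 0
  have hA0 : Tendsto (fun t => ∫ r in t..t + T, |g r|) atTop (nhds 0) := by
    rw [Metric.tendsto_atTop]
    intro ε hε
    set δ : ℝ := ε / (1 + T) with hδdef
    have hδpos : 0 < δ := by
      apply div_pos hε; linarith
    obtain ⟨N, hN⟩ := (Metric.tendsto_atTop.mp hI0) (δ ^ 2) (by positivity)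
    refine ⟨max N 0, fun t ht => ?_⟩
    have ht0 : (0:ℝ) ≤ t := le_trans (le_max_right N 0) ht
    have htN : N ≤ t := le_trans (le_max_left N 0) ht
    have htT : t ≤ t + T := by linarith
    have hIt : (∫ s in t..t + T, g s ^ 2) < δ ^ 2 := by
      have h := hN t htN
      rw [Real.dist_eq, sub_zero, abs_of_nonneg (hInn t (t + T) htT)] at h
      exact h
    have hsub' : Set.uIcc t (t + T) ⊆ Set.Ici 0 := by
      rw [Set.uIcc_of_le htT]; exact fun x hx => ht0.trans hx.1
    have hAle : (∫ r in t..t + T, |g r|)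
        ≤ (∫ s in t..t + T, g s ^ 2) / (2 * δ) + δ / 2 * T := by
      have hpt : ∀ r ∈ Set.Icc t (t + T), |g r| ≤ g r ^ 2 / (2 * δ) + δ / 2 := by
        intro r _
        have h1 : 2 * δ * |g r| ≤ g r ^ 2 + δ ^ 2 := by
          nlinarith [sq_nonneg (|g r| - δ), sq_abs (g r)]
        rw [← sub_nonneg]
        have h2 : g r ^ 2 / (2 * δ) + δ / 2 - |g r|
            = (g r ^ 2 + δ ^ 2 - 2 * δ * |g r|) / (2 * δ) := by
          field_simp
        rw [h2]
        exact div_nonneg (by linarith) (by positivity)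
      have hint1 : IntervalIntegrable (fun r => |g r|) MeasureTheory.volume t (t + T) :=
        ((hgc.mono hsub').abs).intervalIntegrable
      have hint2 : IntervalIntegrable (fun r => g r ^ 2 / (2 * δ) + δ / 2)
          MeasureTheory.volume t (t + T) :=
        ((((hgc.mono hsub').pow 2).div_const _).add continuousOn_const).intervalIntegrable
      have h := intervalIntegral.integral_mono_on htT hint1 hint2 hpt
      rw [intervalIntegral.integral_add (f := fun s => g s ^ 2 / (2 * δ)) (((hgc.mono hsub').pow 2).div_const _).intervalIntegrable
        intervalIntegrable_const, intervalIntegral.integral_div,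
        intervalIntegral.integral_const] at h
      simpa [smul_eq_mul, mul_comm] using h
    have hApos : (0:ℝ) ≤ ∫ r in t..t + T, |g r| :=
      intervalIntegral.integral_nonneg htT (fun u _ => abs_nonneg _)
    rw [Real.dist_eq, sub_zero, abs_of_nonneg hApos]
    have h1 : (∫ s in t..t + T, g s ^ 2) / (2 * δ) < δ / 2 := by
      rw [div_lt_iff₀ (by positivity)]
      nlinarith
    have h4 : δ * (1 + T) = ε := by
      rw [hδdef]; field_simp
    calc (∫ r in t..t + T, |g r|)
        ≤ (∫ s in t..t + T, g s ^ 2) / (2 * δ) + δ / 2 * T := hAle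
      _ < δ / 2 + δ / 2 * T := by linarith
      _ = δ * (1 + T) / 2 := by ring
      _ = ε / 2 := by rw [h4]
      _ < ε := by linarith
  -- combine
  have hD0 : Tendsto (fun t => γ * C * ∫ r in t..t + T, |g r|) atTop (nhds 0) := by
    have := hA0.const_mul (γ * C)
    simpa using this
  have hRHS : Tendsto (fun t => (2 * (∫ s in t..t + T, g s ^ 2)
      + 2 * (C * (γ * C * ∫ r in t..t + T, |g r|)) ^ 2 * T) / α) atTop (nhds 0) := by
    have h1 : Tendsto (fun t => C * (γ * C * ∫ r in t..t + T, |g r|)) atTop (nhds 0) := by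
      have := hD0.const_mul C
      simpa using this
    have h2 := ((hI0.const_mul 2).add (((h1.pow 2).const_mul 2).mul_const T)).div_const α
    norm_num at h2
    convert h2 using 2 <;> norm_num
  have hsq : Tendsto (fun t => ‖θt t‖ ^ 2) atTop (nhds 0) := by
    apply squeeze_zero' (Filter.Eventually.of_forall (fun t => sq_nonneg _)) ?_ hRHS
    filter_upwards [Ici_mem_atTop (0:ℝ)] with t ht
    have h := key5 t ht
    rw [le_div_iff₀ hα]
    linarith
  have hnorm : Tendsto (fun t => ‖θt t‖) atTop (nhds 0) := by
    have h := (Real.continuous_sqrt.tendsto 0).comp hsq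
    simp only [Function.comp_def, Real.sqrt_zero] at h
    refine h.congr (fun t => ?_)
    exact Real.sqrt_sq (norm_nonneg _)
  exact tendsto_zero_iff_norm_tendsto_zero.mpr hnorm
end
end

section
/- (Time-varying swapping lemma, key step of Theorem 3.) Let G : [0,∞) → ℝ^{n×n} and φ : [0,∞) → ℝᵐ be continuous, b ∈ ℝⁿ, θ ∈ ℝᵐ constant, and θ̂ : [0,∞) → ℝᵐ differentiable; write θ̃ := θ − θ̂. Suppose ε : [0,∞) → ℝⁿ satisfies ε' = G(t) ε + b φ(t)ᵀ θ̃(t), η : [0,∞) → ℝⁿ satisfies η' = G(t) η − Ω(t) θ̂'(t), and Ω : [0,∞) → ℝ^{n×m} satisfies Ω' = G(t) Ω + b φ(t)ᵀ. Then δ := ε + η − Ω θ̃ satisfies δ' = G(t) δ, and consequently the augmented error ê := cᵀε + cᵀη satisfies ê(t) = (Ω(t)ᵀ c)ᵀ θ̃(t) + cᵀ δ(t) for every c ∈ ℝⁿ and all t ≥ 0. -/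
open Matrix Filter
open scoped RealInnerProductSpace

attribute [local instance] Matrix.normedAddCommGroup Matrix.normedSpace

noncomputable section

lemma hasDerivAt_euclidean {n : ℕ} (f : ℝ → EuclideanSpace ℝ (Fin n))
    (v : EuclideanSpace ℝ (Fin n)) (t : ℝ) :
    HasDerivAt f v t ↔ ∀ i, HasDerivAt (fun s => f s i) (v i) t := by
  constructor
  · intro h
    exact hasDerivAt_pi.1
      ((EuclideanSpace.equiv (Fin n) ℝ).toContinuousLinearMap.hasFDerivAt.comp_hasDerivAt t h)
  · intro h
    exact ((EuclideanSpace.equiv (Fin n) ℝ).symm.toContinuousLinearMap.hasFDerivAt.comp_hasDerivAt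
      t (hasDerivAt_pi.2 h))

/-- **Time-varying swapping lemma** (key step of Theorem 3): with `θ̃ = θ - θ̂`, the
auxiliary error `δ = ε + η - Ω θ̃` obeys `δ' = G(t) δ`, hence the augmented error
`ê = cᵀε + cᵀη` equals `(Ωᵀc)ᵀ θ̃ + cᵀδ`. -/
theorem time_varying_swapping_lemma
    {n m : ℕ}
    (G : ℝ → Matrix (Fin n) (Fin n) ℝ) (hG : ∀ i j, Continuous fun t => G t i j)
    (φ : ℝ → EuclideanSpace ℝ (Fin m)) (hφ : Continuous φ)
    (b : EuclideanSpace ℝ (Fin n)) (θ : EuclideanSpace ℝ (Fin m))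
    (θh θhd : ℝ → EuclideanSpace ℝ (Fin m)) (hθh : ∀ t, HasDerivAt θh (θhd t) t)
    (ε η : ℝ → EuclideanSpace ℝ (Fin n)) (Ω : ℝ → Matrix (Fin n) (Fin m) ℝ)
    -- error model:  ε' = G(t) ε + b φ(t)ᵀ θ̃
    (hε : ∀ t ≥ (0:ℝ),
      HasDerivAt ε (toE ((G t).mulVec (ε t)) + (⟪φ t, θ - θh t⟫ : ℝ) • b) t)
    -- filter:  η' = G(t) η - Ω θ̂'
    (hη : ∀ t ≥ (0:ℝ),
      HasDerivAt η (toE ((G t).mulVec (η t)) - toE ((Ω t).mulVec (θhd t))) t)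
    -- filter:  Ω' = G(t) Ω + b φ(t)ᵀ
    (hΩ : ∀ t ≥ (0:ℝ), HasDerivAt Ω (G t * Ω t + Matrix.vecMulVec b (φ t)) t)
    (δ : ℝ → EuclideanSpace ℝ (Fin n))
    (hδ : ∀ t, δ t = ε t + η t - toE ((Ω t).mulVec (θ - θh t))) :
    (∀ t ≥ (0:ℝ), HasDerivAt δ (toE ((G t).mulVec (δ t))) t) ∧
    ∀ c : EuclideanSpace ℝ (Fin n), ∀ t ≥ (0:ℝ),
      (⟪c, ε t⟫ : ℝ) + ⟪c, η t⟫ = ⟪toE ((Ω t)ᵀ.mulVec c), θ - θh t⟫ + ⟪c, δ t⟫ := by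
  constructor
  · intro t ht
    have hψ : ∀ j, HasDerivAt (fun s => θ j - θh s j) (-(θhd t j)) t := by
      intro j
      simpa using (hasDerivAt_const t (θ j)).fun_sub
        ((hasDerivAt_euclidean θh (θhd t) t).1 (hθh t) j)
    have hΩij : ∀ i j, HasDerivAt (fun s => Ω s i j)
        ((G t * Ω t + Matrix.vecMulVec b (φ t)) i j) t := by
      intro i j
      exact hasDerivAt_pi.1 (hasDerivAt_pi.1 (hΩ t ht) i) j
    rw [hasDerivAt_euclidean]
    intro i
    have hεi := (hasDerivAt_euclidean ε _ t).1 (hε t ht) i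
    have hηi := (hasDerivAt_euclidean η _ t).1 (hη t ht) i
    have hΩψ : HasDerivAt (fun s => ∑ j, Ω s i j * (θ j - θh s j))
        (∑ j, ((G t * Ω t + Matrix.vecMulVec b (φ t)) i j * (θ j - θh t j)
          + Ω t i j * (-(θhd t j)))) t := by
      exact HasDerivAt.fun_sum (fun j _ => (hΩij i j).fun_mul (hψ j))
    have key : HasDerivAt (fun s => ε s i + η s i - ∑ j, Ω s i j * (θ j - θh s j))
        (toE ((G t).mulVec (δ t)) i) t := by
      refine HasDerivAt.congr_deriv ((hεi.add hηi).sub hΩψ) ?_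
      simp only [toE, Matrix.mulVec, dotProduct, hδ, PiLp.add_apply, PiLp.sub_apply,
        PiLp.smul_apply, smul_eq_mul, Matrix.mul_apply, Matrix.add_apply,
        Matrix.vecMulVec_apply, PiLp.inner_apply, RCLike.inner_apply, conj_trivial,
        add_mul, mul_sub, mul_add, sub_mul,
        Finset.sum_add_distrib, Finset.mul_sum, Finset.sum_sub_distrib,
        Finset.sum_mul, mul_neg, Finset.sum_neg_distrib, Pi.sub_apply]
      rw [Finset.sum_comm]
      have h1 : ∑ x : Fin n, ∑ i_1 : Fin m, G t i x * (Ω t x i_1 * θ i_1)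
          = ∑ x : Fin m, ∑ i_1 : Fin n, G t i i_1 * Ω t i_1 x * θ x := by
        rw [Finset.sum_comm]
        exact Finset.sum_congr rfl (fun _ _ => Finset.sum_congr rfl (fun _ _ => by ring))
      have h2 : ∑ x : Fin n, ∑ i_1 : Fin m, G t i x * (Ω t x i_1 * θh t i_1)
          = ∑ x : Fin m, ∑ i_1 : Fin n, G t i i_1 * Ω t i_1 x * θh t x := by
        rw [Finset.sum_comm]
        exact Finset.sum_congr rfl (fun _ _ => Finset.sum_congr rfl (fun _ _ => by ring))
      rw [h1, h2]
      have e1 : ∑ j : Fin m, θ j * φ t j * b i = ∑ j : Fin m, b i * φ t j * θ j :=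
        Finset.sum_congr rfl (fun j _ => by ring)
      have e2 : ∑ j : Fin m, θh t j * φ t j * b i = ∑ j : Fin m, b i * φ t j * θh t j :=
        Finset.sum_congr rfl (fun j _ => by ring)
      rw [e1, e2]
      ring_nf
      have h3 : ∑ x : Fin n, ∑ x_1 : Fin m, G t i x * Ω t x x_1 * θ x_1
          = ∑ x : Fin m, ∑ x_1 : Fin n, G t i x_1 * Ω t x_1 x * θ x := Finset.sum_comm
      linear_combination -h3
    have heq : (fun s => δ s i) = fun s => ε s i + η s i - ∑ j, Ω s i j * (θ j - θh s j) := by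
      funext s
      simp [hδ, toE, Matrix.mulVec, dotProduct, PiLp.add_apply, PiLp.sub_apply]
    rw [heq]
    exact key
  · intro c t ht
    simp only [hδ, toE, PiLp.inner_apply, RCLike.inner_apply, conj_trivial,
      PiLp.add_apply, PiLp.sub_apply, Matrix.mulVec, dotProduct,
      Matrix.transpose_apply, mul_sub, mul_add, sub_mul, add_mul, Finset.sum_sub_distrib,
      Finset.sum_add_distrib, Finset.mul_sum, Finset.sum_mul, Pi.sub_apply]
    have h1 : ∑ x : Fin m, ∑ x_1 : Fin n, θ x * (Ω t x_1 x * c x_1)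
        = ∑ x : Fin n, ∑ i : Fin m, Ω t x i * θ i * c x := by
      rw [Finset.sum_comm]
      exact Finset.sum_congr rfl (fun _ _ => Finset.sum_congr rfl (fun _ _ => by ring))
    have h2 : ∑ x : Fin m, ∑ x_1 : Fin n, θh t x * (Ω t x_1 x * c x_1)
        = ∑ x : Fin n, ∑ i : Fin m, Ω t x i * θh t i * c x := by
      rw [Finset.sum_comm]
      exact Finset.sum_congr rfl (fun _ _ => Finset.sum_congr rfl (fun _ _ => by ring))
    rw [h1, h2]
    ring
end
end

section
/- (Perturbed time-varying swapping lemma, key step of Theorem 5.) Let Ḡ : [0,∞) → ℝ^{n×n}, φ̄ : [0,∞) → ℝᵐ, Δ : [0,∞) → ℝⁿ be continuous, b ∈ ℝⁿ, θ ∈ ℝᵐ constant, θ̂ : [0,∞) → ℝᵐ differentiable, and write θ̃ := θ − θ̂. Suppose ε' = Ḡ(t) ε + b φ̄(t)ᵀ θ̃(t) + Δ(t), η̄' = Ḡ(t) η̄ − Ω̄(t) θ̂'(t), and Ω̄' = Ḡ(t) Ω̄ + b φ̄(t)ᵀ. Then Ξ_δ := ε + η̄ − Ω̄ θ̃ satisfies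 Ξ_δ' = Ḡ(t) Ξ_δ + Δ(t); consequently, for every c ∈ ℝⁿ, cᵀε + cᵀη̄ = (Ω̄(t)ᵀc)ᵀ θ̃(t) + cᵀ Ξ_δ(t) for all t ≥ 0. -/
open Matrix Filter
open scoped RealInnerProductSpace

attribute [local instance] Matrix.normedAddCommGroup Matrix.normedSpace

noncomputable section

lemma hasDerivAt_E {n : ℕ} {f : ℝ → EuclideanSpace ℝ (Fin n)} {f' : EuclideanSpace ℝ (Fin n)}
    {x : ℝ} : HasDerivAt f f' x ↔ ∀ i, HasDerivAt (fun t => f t i) (f' i) x := by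
  constructor
  · intro h i
    have := ((EuclideanSpace.equiv (Fin n) ℝ).toContinuousLinearMap.hasFDerivAt).comp_hasDerivAt x h
    exact hasDerivAt_pi.1 this i
  · intro h
    have h2 := hasDerivAt_pi.2 h
    exact ((EuclideanSpace.equiv (Fin n) ℝ).symm.toContinuousLinearMap.hasFDerivAt).comp_hasDerivAt x h2

lemma hasDerivAt_M {n m : ℕ} {f : ℝ → Matrix (Fin n) (Fin m) ℝ} {f' : Matrix (Fin n) (Fin m) ℝ}
    {x : ℝ} (h : HasDerivAt f f' x) (i : Fin n) (j : Fin m) :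
    HasDerivAt (fun t => f t i j) (f' i j) x :=
  hasDerivAt_pi.1 (hasDerivAt_pi.1 h i) j


/-- **Perturbed time-varying swapping lemma** (key step of Theorem 5): with `θ̃ = θ - θ̂`,
the auxiliary error `Ξδ = ε + η̄ - Ω̄ θ̃` obeys `Ξδ' = Ḡ(t) Ξδ + Δ(t)`, hence
`cᵀε + cᵀη̄ = (Ω̄ᵀc)ᵀ θ̃ + cᵀ Ξδ`. -/
theorem perturbed_time_varying_swapping_lemma
    {n m : ℕ}
    (Gb : ℝ → Matrix (Fin n) (Fin n) ℝ) (hGb : ∀ i j, Continuous fun t => Gb t i j)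
    (φb : ℝ → EuclideanSpace ℝ (Fin m)) (hφb : Continuous φb)
    (Δ : ℝ → EuclideanSpace ℝ (Fin n)) (hΔ : Continuous Δ)
    (b : EuclideanSpace ℝ (Fin n)) (θ : EuclideanSpace ℝ (Fin m))
    (θh θhd : ℝ → EuclideanSpace ℝ (Fin m)) (hθh : ∀ t, HasDerivAt θh (θhd t) t)
    (ε ηb : ℝ → EuclideanSpace ℝ (Fin n)) (Ωb : ℝ → Matrix (Fin n) (Fin m) ℝ)
    -- perturbed error model:  ε' = Ḡ(t) ε + b φ̄(t)ᵀ θ̃ + Δ(t)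
    (hε : ∀ t ≥ (0:ℝ),
      HasDerivAt ε (toE ((Gb t).mulVec (ε t)) + (⟪φb t, θ - θh t⟫ : ℝ) • b + Δ t) t)
    -- filter:  η̄' = Ḡ(t) η̄ - Ω̄ θ̂'
    (hηb : ∀ t ≥ (0:ℝ),
      HasDerivAt ηb (toE ((Gb t).mulVec (ηb t)) - toE ((Ωb t).mulVec (θhd t))) t)
    -- filter:  Ω̄' = Ḡ(t) Ω̄ + b φ̄(t)ᵀ
    (hΩb : ∀ t ≥ (0:ℝ), HasDerivAt Ωb (Gb t * Ωb t + Matrix.vecMulVec b (φb t)) t)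
    (Ξδ : ℝ → EuclideanSpace ℝ (Fin n))
    (hΞδ : ∀ t, Ξδ t = ε t + ηb t - toE ((Ωb t).mulVec (θ - θh t))) :
    (∀ t ≥ (0:ℝ), HasDerivAt Ξδ (toE ((Gb t).mulVec (Ξδ t)) + Δ t) t) ∧
    ∀ c : EuclideanSpace ℝ (Fin n), ∀ t ≥ (0:ℝ),
      (⟪c, ε t⟫ : ℝ) + ⟪c, ηb t⟫ = ⟪toE ((Ωb t)ᵀ.mulVec c), θ - θh t⟫ + ⟪c, Ξδ t⟫ := by
  constructor
  · intro t ht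
    rw [funext hΞδ]
    rw [hasDerivAt_E]
    intro i
    -- componentwise derivatives of the pieces
    have hεi := hasDerivAt_E.1 (hε t ht) i
    have hηi := hasDerivAt_E.1 (hηb t ht) i
    have hθj : ∀ j, HasDerivAt (fun t => θ j - θh t j) (-(θhd t j)) t := fun j => by
      simpa using (hasDerivAt_const t (θ j)).fun_sub (hasDerivAt_E.1 (hθh t) j)
    have hΩij : ∀ (i : Fin n) (j : Fin m),
        HasDerivAt (fun t => Ωb t i j) ((Gb t * Ωb t + Matrix.vecMulVec b (φb t)) i j) t :=
      fun i j => hasDerivAt_M (hΩb t ht) i j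
    have hsum : HasDerivAt (fun s => ∑ j, Ωb s i j * (θ j - θh s j))
        (∑ j, ((Gb t * Ωb t + Matrix.vecMulVec b (φb t)) i j * (θ j - θh t j)
          + Ωb t i j * (-(θhd t j)))) t :=
      HasDerivAt.fun_sum fun j _ => (hΩij i j).fun_mul (hθj j)
    have key := (hεi.fun_add hηi).fun_sub hsum
    have hfe : (fun s => ε s i + ηb s i - ∑ j, Ωb s i j * (θ j - θh s j))
        = fun s => (ε s + ηb s - toE ((Ωb s).mulVec (θ - θh s))) i := by
      funext s
      simp [toE, Matrix.mulVec, dotProduct]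
    rw [hfe] at key
    convert key using 1
    any_goals with_reducible_and_instances rfl
    have swapθ : ∑ x : Fin n, Gb t i x * ∑ k : Fin m, Ωb t x k * θ k
        = ∑ k : Fin m, (∑ j : Fin n, Gb t i j * Ωb t j k) * θ k := by
      simp_rw [Finset.mul_sum, Finset.sum_mul]
      rw [Finset.sum_comm]
      exact Finset.sum_congr rfl fun k _ => Finset.sum_congr rfl fun j _ => by ring
    have swapθh : ∑ x : Fin n, Gb t i x * ∑ k : Fin m, Ωb t x k * θh t k
        = ∑ k : Fin m, (∑ j : Fin n, Gb t i j * Ωb t j k) * θh t k := by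
      simp_rw [Finset.mul_sum, Finset.sum_mul]
      rw [Finset.sum_comm]
      exact Finset.sum_congr rfl fun k _ => Finset.sum_congr rfl fun j _ => by ring
    have hb1 : ∑ x : Fin m, b i * φb t x * θ x = (∑ x : Fin m, φb t x * θ x) * b i := by
      rw [Finset.sum_mul]
      exact Finset.sum_congr rfl fun x _ => by ring
    have hb2 : ∑ x : Fin m, b i * φb t x * θh t x = b i * ∑ x : Fin m, φb t x * θh t x := by
      rw [Finset.mul_sum]
      exact Finset.sum_congr rfl fun x _ => by ring
    simp only [toE, Pi.sub_apply, Matrix.mulVec, dotProduct, Matrix.add_apply, Matrix.mul_apply,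
      Matrix.vecMulVec_apply, PiLp.add_apply, PiLp.sub_apply, PiLp.smul_apply,
      PiLp.inner_apply, RCLike.inner_apply', starRingEnd_apply, smul_eq_mul, star_trivial]
    simp only [mul_sub, mul_add, add_mul, sub_mul, mul_neg, neg_mul,
      Finset.sum_add_distrib, Finset.sum_sub_distrib, Finset.sum_neg_distrib]
    ring_nf
    linear_combination -swapθ + swapθh + hb1 - hb2
  · intro c t ht
    rw [hΞδ t]
    have swapθ : ∑ x : Fin n, c x * ∑ k : Fin m, Ωb t x k * θ k
        = ∑ k : Fin m, (∑ j : Fin n, Ωb t j k * c j) * θ k := by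
      simp_rw [Finset.mul_sum, Finset.sum_mul]
      rw [Finset.sum_comm]
      exact Finset.sum_congr rfl fun k _ => Finset.sum_congr rfl fun j _ => by ring
    have swapθh : ∑ x : Fin n, c x * ∑ k : Fin m, Ωb t x k * θh t k
        = ∑ k : Fin m, (∑ j : Fin n, Ωb t j k * c j) * θh t k := by
      simp_rw [Finset.mul_sum, Finset.sum_mul]
      rw [Finset.sum_comm]
      exact Finset.sum_congr rfl fun k _ => Finset.sum_congr rfl fun j _ => by ring
    simp only [toE, Pi.sub_apply, PiLp.inner_apply, RCLike.inner_apply', starRingEnd_apply, PiLp.add_apply,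
      PiLp.sub_apply, Matrix.mulVec, dotProduct, Matrix.transpose_apply, star_trivial]
    simp only [mul_sub, mul_add, Finset.sum_add_distrib, Finset.sum_sub_distrib]
    ring_nf
    linear_combination swapθ - swapθh
end
end

section
/- (Exponential stability of the Lorenz observer error dynamics.) Let σ > 0 and β > 0, and for y ∈ ℝ define the matrix G(y) ∈ ℝ^{3×3} by G(y) = [[−σ, σ, 0], [−σ, −1, −y], [0, y, −β]]. Then every differentiable solution x : [0,∞) → ℝ³ of ẋ = G(x₁) x satisfies, for all t ≥ 0, (d/dt)(½|x(t)|²) = −σ x₁(t)² − x₂(t)² − β x₃(t)² ≤ −min(σ, 1, β) |x(t)|², and consequently |x(t)| ≤ e^{−min(σ,1,β) t} |x(0)| for all t ≥ 0. -/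
open Matrix Filter
open scoped RealInnerProductSpace

attribute [local instance] Matrix.normedAddCommGroup Matrix.normedSpace

noncomputable section

/-- **Exponential stability of the Lorenz observer error dynamics**: for
`G(y) = [[-σ, σ, 0], [-σ, -1, -y], [0, y, -β]]`, every solution of `ẋ = G(x₁)x` satisfies
`(½|x|²)' = -σx₁² - x₂² - βx₃² ≤ -min(σ,1,β)|x|²` and `|x(t)| ≤ e^{-min(σ,1,β)t}|x(0)|`. -/
theorem lorenz_observer_error_exponential_stability
    (σ β : ℝ) (hσ : 0 < σ) (hβ : 0 < β)
    (G : ℝ → Matrix (Fin 3) (Fin 3) ℝ)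
    (hG : ∀ s : ℝ, G s = !![-σ, σ, 0; -σ, -1, -s; 0, s, -β])
    (x : ℝ → EuclideanSpace ℝ (Fin 3))
    (hx : ∀ t ≥ (0:ℝ), HasDerivAt x (toE ((G (x t 0)).mulVec (x t))) t) :
    (∀ t ≥ (0:ℝ),
      HasDerivAt (fun s => (1 / 2 : ℝ) * ‖x s‖ ^ 2)
        (-σ * (x t 0) ^ 2 - (x t 1) ^ 2 - β * (x t 2) ^ 2) t ∧
      -σ * (x t 0) ^ 2 - (x t 1) ^ 2 - β * (x t 2) ^ 2
        ≤ -(min σ (min 1 β)) * ‖x t‖ ^ 2) ∧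
    ∀ t ≥ (0:ℝ), ‖x t‖ ≤ Real.exp (-(min σ (min 1 β)) * t) * ‖x 0‖ := by
  set m := min σ (min 1 β) with hm
  have hm1 : m ≤ σ := min_le_left _ _
  have hm2 : m ≤ 1 := le_trans (min_le_right _ _) (min_le_left _ _)
  have hm3 : m ≤ β := le_trans (min_le_right _ _) (min_le_right _ _)
  have hmpos : 0 < m := lt_min hσ (lt_min one_pos hβ)
  -- norm squared as sum of squares
  have hns : ∀ t, ‖x t‖ ^ 2 = (x t 0)^2 + (x t 1)^2 + (x t 2)^2 := by
    intro t
    rw [← real_inner_self_eq_norm_sq]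
    simp only [PiLp.inner_apply, RCLike.inner_apply, conj_trivial, Fin.sum_univ_three]
    ring
  -- the derivative value
  have key : ∀ t ≥ (0:ℝ),
      HasDerivAt (fun s => (1 / 2 : ℝ) * ‖x s‖ ^ 2)
        (-σ * (x t 0) ^ 2 - (x t 1) ^ 2 - β * (x t 2) ^ 2) t := by
    intro t ht
    have h1 := ((hx t ht).inner ℝ (hx t ht)).const_mul (1/2 : ℝ)
    have heq : ∀ s : ℝ, (1/2 : ℝ) * (⟪x s, x s⟫ : ℝ) = (1/2 : ℝ) * ‖x s‖ ^ 2 := by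
      intro s; rw [real_inner_self_eq_norm_sq]
    have h2 : HasDerivAt (fun s => (1/2 : ℝ) * ‖x s‖ ^ 2)
        ((1/2 : ℝ) * (⟪x t, toE ((G (x t 0)).mulVec (x t))⟫
          + ⟪toE ((G (x t 0)).mulVec (x t)), x t⟫)) t := by
      simp only [heq] at h1
      exact h1
    convert h2 using 1
    simp only [toE, PiLp.inner_apply, RCLike.inner_apply, starRingEnd_apply, star_trivial,
      Fin.sum_univ_three, hG, Matrix.mulVec, dotProduct, Fin.sum_univ_three,
      Matrix.of_apply, Matrix.cons_val', Matrix.cons_val_zero, Matrix.cons_val_one, Matrix.head_cons,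
      Matrix.empty_val', Matrix.cons_val_fin_one, Matrix.head_fin_const,
      Matrix.cons_val_two, Matrix.tail_cons]
    ring
  have bound : ∀ t, -σ * (x t 0) ^ 2 - (x t 1) ^ 2 - β * (x t 2) ^ 2
      ≤ -m * ‖x t‖ ^ 2 := by
    intro t
    rw [hns t]
    nlinarith [sq_nonneg (x t 0), sq_nonneg (x t 1), sq_nonneg (x t 2)]
  refine ⟨fun t ht => ⟨key t ht, bound t⟩, ?_⟩
  -- exponential decay
  intro t ht
  set g : ℝ → ℝ := fun s => Real.exp (2 * m * s) * ‖x s‖ ^ 2 with hgdef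
  have hg : ∀ s ≥ (0:ℝ), HasDerivAt g
      (2 * m * Real.exp (2 * m * s) * ‖x s‖ ^ 2
        + Real.exp (2 * m * s) * (2 * (-σ * (x s 0) ^ 2 - (x s 1) ^ 2 - β * (x s 2) ^ 2))) s := by
    intro s hs
    have he : HasDerivAt (fun u : ℝ => Real.exp (2 * m * u)) (2 * m * Real.exp (2 * m * s)) s := by
      simpa [mul_comm, mul_assoc, mul_left_comm] using
        ((hasDerivAt_id s).const_mul (2*m)).exp
    have hv : HasDerivAt (fun u => ‖x u‖ ^ 2)
        (2 * (-σ * (x s 0) ^ 2 - (x s 1) ^ 2 - β * (x s 2) ^ 2)) s := by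
      have := (key s hs).const_mul (2:ℝ)
      simpa [mul_comm, mul_assoc, mul_left_comm] using this
    exact he.mul hv
  have hanti : AntitoneOn g (Set.Ici (0:ℝ)) := by
    apply antitoneOn_of_deriv_nonpos (convex_Ici 0)
    · intro s hs
      exact ((hg s hs).continuousAt).continuousWithinAt
    · intro s hs
      rw [interior_Ici] at hs
      exact ((hg s (le_of_lt hs)).differentiableAt).differentiableWithinAt
    · intro s hs
      rw [interior_Ici] at hs
      rw [(hg s (le_of_lt hs)).deriv]
      have hb := bound s
      have hexp : 0 < Real.exp (2 * m * s) := Real.exp_pos _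
      nlinarith [hns s, sq_nonneg (x s 0), sq_nonneg (x s 1), sq_nonneg (x s 2)]
  have hle : g t ≤ g 0 := hanti (Set.self_mem_Ici) (Set.mem_Ici.mpr ht) ht
  have hg0 : g 0 = ‖x 0‖ ^ 2 := by simp [hgdef]
  have hgt : g t = Real.exp (2 * m * t) * ‖x t‖ ^ 2 := rfl
  have hexp : 0 < Real.exp (2 * m * t) := Real.exp_pos _
  have hsq : ‖x t‖ ^ 2 ≤ (Real.exp (-m * t) * ‖x 0‖) ^ 2 := by
    have h2 : Real.exp (-m * t) ^ 2 = Real.exp (-(2*m*t)) := by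
      rw [← Real.exp_nat_mul]; ring_nf
    have h3 : Real.exp (-(2*m*t)) * Real.exp (2*m*t) = 1 := by
      rw [← Real.exp_add]; simp
    rw [mul_pow, h2]
    rw [hgt, hg0] at hle
    nlinarith [Real.exp_pos (-(2*m*t))]
  have h0 : (0:ℝ) ≤ Real.exp (-m * t) * ‖x 0‖ := by positivity
  nlinarith [norm_nonneg (x t)]
end
end
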